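/- Let A be a closed subset of a real Hilbert space X, x̄ ∈ A, ε > 0 and q > 0. Suppose b ∉ A and ‖b−x̄‖^q < d^q(b,A) + ε. Then for any λ > 0 there exists a point a ∈ A ∩ B_λ(x̄) such that ‖b−a‖^q < d^q(b,A) + ε and qλ‖b−a‖^{q−2}·d(b−a, N^F_A(a)) < ε. -/

import Mathlib

/-!
Let `f x = ‖b - x‖ ^ q`. Adding to `f` the smoothed distance `s √(‖x - x̄‖² + η²)`, with slope `s`
just below `ε / λ`, forces every point of `A` where the penalized function is no larger than at `x̄`
into `B_λ(x̄)`. The Borwein–Preiss variational principle then gives a point `a` minimizing on `A`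
the penalized function plus `σ ‖x - c‖²`, with `σ ‖a - c‖` as small as we like: in a Hilbert space
its weighted sum of squared distances collapses to such a single quadratic. At a minimizer minus
the gradient is a Fréchet normal; dividing it by `q ‖b - a‖ ^ (q - 2)` shows that `b - a` lies
within `(s + 2σ ‖a - c‖) / (q ‖b - a‖ ^ (q - 2))` of `N_A(a)`.
-/

/-- The Fréchet normal cone to `Ω` at `xbar` in a real Hilbert space (identified with its
dual): `{v : limsup_{Ω∋x→xbar, x≠xbar} ⟨v, x−xbar⟩/‖x−xbar‖ ≤ 0}`. -/
def frechetNormal {X : Type*} [NormedAddCommGroup X] [InnerProductSpace ℝ X]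
    (Ω : Set X) (xbar : X) : Set X :=
  {v : X | ∀ ε > (0 : ℝ), ∃ δ > (0 : ℝ), ∀ x ∈ Ω, x ≠ xbar → ‖x - xbar‖ < δ →
    (inner ℝ v (x - xbar) : ℝ) ≤ ε * ‖x - xbar‖}

open Filter Topology Metric Finset

section FrechetNormal

variable {X : Type*} [NormedAddCommGroup X] [InnerProductSpace ℝ X] {A : Set X} {a : X}

lemma smul_mem_frechetNormal {v : X} {t : ℝ} (ht : 0 < t) (hv : v ∈ frechetNormal A a) :
    t • v ∈ frechetNormal A a := by
  intro ε hε
  obtain ⟨δ, hδ, h⟩ := hv (ε / t) (by positivity)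
  refine ⟨δ, hδ, fun x hx hxa hxd => ?_⟩
  calc inner ℝ (t • v) (x - a) = t * inner ℝ v (x - a) := real_inner_smul_left _ _ _
    _ ≤ t * (ε / t * ‖x - a‖) := mul_le_mul_of_nonneg_left (h x hx hxa hxd) ht.le
    _ = ε * ‖x - a‖ := by field_simp

lemma neg_mem_frechetNormal_of_isMinOn {G : X → ℝ} {v : X} (hmin : IsMinOn G A a)
    (hG : HasFDerivAt G (innerSL ℝ v) a) : -v ∈ frechetNormal A a := by
  intro ε hε
  obtain ⟨δ, hδ, h⟩ := Metric.eventually_nhds_iff.1 (hG.isLittleO.def hε)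
  refine ⟨δ, hδ, fun x hx _ hxd => ?_⟩
  have hx' := h (show dist x a < δ by rwa [dist_eq_norm])
  rw [innerSL_apply_apply, Real.norm_eq_abs] at hx'
  rw [inner_neg_left]
  linarith [le_abs_self (G x - G a - inner ℝ v (x - a)), isMinOn_iff.1 hmin x hx]

lemma infDist_sub_frechetNormal_le {G : X → ℝ} {b w : X} {κ : ℝ} (hκ : 0 < κ)
    (hmin : IsMinOn G A a) (hG : HasFDerivAt G (innerSL ℝ (κ • (a - b) + w)) a) :
    infDist (b - a) (frechetNormal A a) ≤ ‖w‖ / κ := by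
  have hmem := smul_mem_frechetNormal (inv_pos.2 hκ) (neg_mem_frechetNormal_of_isMinOn hmin hG)
  have hκ' : κ ≠ 0 := hκ.ne'
  calc infDist (b - a) (frechetNormal A a) ≤ dist (b - a) (κ⁻¹ • -(κ • (a - b) + w)) :=
        infDist_le_dist_of_mem hmem
    _ = ‖κ⁻¹ • w‖ := by
        rw [dist_eq_norm, smul_neg, smul_add, smul_smul, inv_mul_cancel₀ hκ', one_smul]
        congr 1; abel
    _ = ‖w‖ / κ := by rw [norm_smul, Real.norm_of_nonneg (inv_pos.2 hκ).le, inv_mul_eq_div]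

end FrechetNormal

section Derivatives

variable {X : Type*} [NormedAddCommGroup X] [InnerProductSpace ℝ X]

lemma hasFDerivAt_norm_sub_sq (c a : X) :
    HasFDerivAt (fun x => ‖x - c‖ ^ 2) (innerSL ℝ ((2 : ℝ) • (a - c))) a := by
  refine ((hasFDerivAt_id a).sub_const c).norm_sq.congr_fderiv ?_
  ext y
  simp

lemma hasFDerivAt_norm_sub_rpow {b a : X} (hab : a ≠ b) (q : ℝ) :
    HasFDerivAt (fun x => ‖b - x‖ ^ q) (innerSL ℝ ((q * ‖b - a‖ ^ (q - 2)) • (a - b))) a := by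
  have hpos : 0 < ‖a - b‖ ^ 2 := by positivity [sub_ne_zero.2 hab]
  have h := (hasFDerivAt_norm_sub_sq b a).rpow_const (p := q / 2) (Or.inl hpos.ne')
  have hpow : ∀ (y : X) (p : ℝ), (‖y‖ ^ 2) ^ p = ‖y‖ ^ (2 * p) := fun y p => by
    rw [← Real.rpow_natCast, ← Real.rpow_mul (norm_nonneg _)]; norm_num
  convert h using 1
  · ext x; rw [hpow, norm_sub_rev]; ring_nf
  · ext y
    simp only [map_smul, map_sub, smul_apply, sub_apply, coe_innerSL_apply, smul_eq_mul,
      norm_sub_rev a b, hpow]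
    ring_nf

lemma hasFDerivAt_sqrt_norm_sub_sq_add_sq (x₀ a : X) {η : ℝ} (hη : 0 < η) :
    ∃ v : X, ‖v‖ ≤ 1 ∧ HasFDerivAt (fun x => √(‖x - x₀‖ ^ 2 + η ^ 2)) (innerSL ℝ v) a := by
  set u := √(‖a - x₀‖ ^ 2 + η ^ 2)
  have hu : 0 < u := Real.sqrt_pos.2 (by positivity)
  refine ⟨u⁻¹ • (a - x₀), ?_, ?_⟩
  · rw [norm_smul, Real.norm_of_nonneg (inv_pos.2 hu).le, inv_mul_le_iff₀ hu, mul_one]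
    exact Real.le_sqrt_of_sq_le (le_add_of_nonneg_right (sq_nonneg η))
  · refine (((hasFDerivAt_norm_sub_sq x₀ a).add_const (η ^ 2)).sqrt (by positivity)).congr_fderiv ?_
    ext y
    simp only [one_div, mul_inv_rev, map_smul, map_sub, smul_apply, sub_apply, coe_innerSL_apply,
      smul_eq_mul]
    field_simp
    exact mul_comm _ _

end Derivatives

lemma exists_mem_le_and_le_add_of_bddBelow {α : Type*} {A : Set α} {F : α → ℝ}
    (hF : BddBelow (F '' A)) {y : α} (hy : y ∈ A) {δ : ℝ} (hδ : 0 < δ) :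
    ∃ z ∈ A, F z ≤ F y ∧ ∀ x ∈ A, F z ≤ F x + δ := by
  obtain ⟨_, ⟨z, hz, rfl⟩, hlt⟩ :=
    exists_lt_of_csInf_lt (⟨F y, y, hy, rfl⟩ : (F '' A).Nonempty)
      (lt_add_of_pos_right (sInf (F '' A)) hδ)
  have hinf : ∀ x ∈ A, sInf (F '' A) ≤ F x := fun x hx => csInf_le hF ⟨x, hx, rfl⟩
  rcases le_total (F z) (F y) with hzy | hyz
  · exact ⟨z, hz, hzy, fun x hx => by linarith [hinf x hx]⟩
  · exact ⟨y, hy, le_rfl, fun x hx => by linarith [hinf x hx]⟩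

namespace BorweinPreiss

variable {X : Type*} [NormedAddCommGroup X]

noncomputable def stage (g : X → ℝ) (σ : ℝ) (xs : ℕ → X) (n : ℕ) (x : X) : ℝ :=
  g x + σ * ∑ k ∈ range n, (2⁻¹ : ℝ) ^ (k + 1) * ‖x - xs k‖ ^ 2

/-- The penalty weight `σ = 2ε/L²`, the weights `2⁻ᵏ⁻¹` and the tolerances `ε 8⁻ⁿ` are tuned so
that `‖xₘ - xₙ‖ ≤ L 2⁻ⁿ` for `n ≤ m`. -/
structure IsMinimizingSeq (A : Set X) (g : X → ℝ) (ε L : ℝ) (xs : ℕ → X) : Prop where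
  mem : ∀ n, xs n ∈ A
  stage_le : ∀ n, ∀ x ∈ A,
    stage g (2 * ε / L ^ 2) xs n (xs n) ≤ stage g (2 * ε / L ^ 2) xs n x + ε * 8⁻¹ ^ n
  stage_succ_le : ∀ n,
    stage g (2 * ε / L ^ 2) xs (n + 1) (xs (n + 1)) ≤ stage g (2 * ε / L ^ 2) xs n (xs n)

variable {g : X → ℝ} {σ : ℝ} {xs : ℕ → X}

lemma stage_succ (n : ℕ) (x : X) :
    stage g σ xs (n + 1) x = stage g σ xs n x + σ * (2⁻¹ : ℝ) ^ (n + 1) * ‖x - xs n‖ ^ 2 := by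
  simp only [stage, sum_range_succ]; ring

lemma stage_mono (hσ : 0 ≤ σ) {n m : ℕ} (hnm : n ≤ m) (x : X) :
    stage g σ xs n x ≤ stage g σ xs m x := by
  unfold stage
  gcongr

lemma self_le_stage (hσ : 0 ≤ σ) (n : ℕ) (x : X) : g x ≤ stage g σ xs n x := by
  simpa [stage] using stage_mono (g := g) (xs := xs) hσ (Nat.zero_le n) x

lemma continuous_stage (hg : Continuous g) (σ : ℝ) (xs : ℕ → X) (n : ℕ) :
    Continuous (stage g σ xs n) := by
  unfold stage; fun_prop

lemma exists_isMinimizingSeq {A : Set X} {ε L : ℝ} (hε : 0 < ε) {x₀ : X} (hx₀ : x₀ ∈ A)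
    (h₀ : ∀ x ∈ A, g x₀ ≤ g x + ε) : ∃ xs, xs 0 = x₀ ∧ IsMinimizingSeq A g ε L xs := by
  set σ := 2 * ε / L ^ 2
  have hσ : 0 ≤ σ := by positivity
  have hbdd : ∀ F : X → ℝ, (∀ x, g x ≤ F x) → BddBelow (F '' A) := fun F hF =>
    ⟨g x₀ - ε, by rintro _ ⟨x, hx, rfl⟩; linarith [h₀ x hx, hF x]⟩
  have step : ∀ (n : ℕ) (F : X → ℝ) (y : X), ∃ z, (∀ x, g x ≤ F x) → y ∈ A →
      z ∈ A ∧ F z ≤ F y ∧ ∀ x ∈ A, F z ≤ F x + ε * 8⁻¹ ^ n := fun n F y => by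
    by_cases h : (∀ x, g x ≤ F x) ∧ y ∈ A
    · obtain ⟨z, hz⟩ := exists_mem_le_and_le_add_of_bddBelow (hbdd F h.1) h.2
        (show 0 < ε * 8⁻¹ ^ n by positivity)
      exact ⟨z, fun _ _ => hz⟩
    · exact ⟨y, fun hF hy => absurd ⟨hF, hy⟩ h⟩
  choose next hnext using step
  -- the state at stage `n` is the pair `(xₙ, stage n)`
  let st : ℕ → X × (X → ℝ) := fun n => Nat.rec (x₀, g)
    (fun n p => let F := fun x => p.2 x + σ * (2⁻¹ : ℝ) ^ (n + 1) * ‖x - p.1‖ ^ 2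
      (next (n + 1) F p.1, F)) n
  have hst : ∀ n, (st n).2 = stage g σ (fun k => (st k).1) n := by
    intro n
    induction n with
    | zero => funext x; simp [st, stage]
    | succ n ih => funext x; rw [stage_succ, ← ih]
  set xs : ℕ → X := fun n => (st n).1
  have hsucc : ∀ n, xs (n + 1) = next (n + 1) (stage g σ xs (n + 1)) (xs n) := fun n => by
    rw [← hst]
  have hmem : ∀ n, xs n ∈ A := by
    intro n
    induction n with
    | zero => exact hx₀
    | succ n ih => rw [hsucc]; exact (hnext _ _ _ (self_le_stage hσ _) ih).1
  refine ⟨xs, rfl, hmem, ?_, fun n => ?_⟩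
  · rintro (_ | n) x hx
    · simpa [stage, xs, st] using h₀ x hx
    · rw [hsucc]; exact (hnext _ _ _ (self_le_stage hσ _) (hmem n)).2.2 x hx
  · calc stage g σ xs (n + 1) (xs (n + 1)) ≤ stage g σ xs (n + 1) (xs n) := by
          rw [hsucc]; exact (hnext _ _ _ (self_le_stage hσ _) (hmem n)).2.1
      _ = stage g σ xs n (xs n) := by simp [stage_succ]

variable {A : Set X} {ε L : ℝ}

lemma IsMinimizingSeq.stage_antitone (hs : IsMinimizingSeq A g ε L xs) {n m : ℕ} (hnm : n ≤ m) :
    stage g (2 * ε / L ^ 2) xs m (xs m) ≤ stage g (2 * ε / L ^ 2) xs n (xs n) :=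
  antitone_nat_of_succ_le (f := fun n => stage g (2 * ε / L ^ 2) xs n (xs n)) hs.stage_succ_le hnm

lemma IsMinimizingSeq.norm_sub_le (hs : IsMinimizingSeq A g ε L xs) (hε : 0 < ε) (hL : 0 < L)
    {n m : ℕ} (hnm : n ≤ m) : ‖xs m - xs n‖ ≤ L * 2⁻¹ ^ n := by
  rcases hnm.eq_or_lt with rfl | hlt
  · simp only [sub_self, norm_zero]; positivity
  set t : ℝ := 2⁻¹ ^ n
  have ht : 0 < t := by positivity
  -- the penalty at `xₙ` is paid by `xₘ` at stage `n + 1`, but costs at most `ε 8⁻ⁿ`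
  have key : 2 * ε / L ^ 2 * (t / 2) * ‖xs m - xs n‖ ^ 2 ≤ ε * t ^ 3 := by
    have h1 := stage_succ (g := g) (σ := 2 * ε / L ^ 2) (xs := xs) n (xs m)
    have h2 := stage_mono (g := g) (σ := 2 * ε / L ^ 2) (xs := xs) (by positivity) hlt (xs m)
    have h3 := hs.stage_antitone hlt.le
    have h4 := hs.stage_le n (xs m) (hs.mem m)
    have h5 : (2⁻¹ : ℝ) ^ (n + 1) = t / 2 := by rw [pow_succ]; ring
    have h6 : (8⁻¹ : ℝ) ^ n = t ^ 3 := by rw [← pow_mul, mul_comm, pow_mul]; norm_num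
    rw [h5] at h1; rw [h6] at h4
    linarith
  have hsq : ‖xs m - xs n‖ ^ 2 ≤ (L * t) ^ 2 := by
    field_simp at key
    rwa [mul_pow]
  exact le_of_sq_le_sq (by simpa using hsq) (by positivity)

lemma IsMinimizingSeq.cauchySeq (hs : IsMinimizingSeq A g ε L xs) (hε : 0 < ε) (hL : 0 < L) :
    CauchySeq xs := by
  refine cauchySeq_of_le_geometric_two (C := 2 * L) fun n => ?_
  rw [dist_comm, dist_eq_norm]
  convert hs.norm_sub_le hε hL n.le_succ using 1
  rw [inv_pow]; ring

lemma IsMinimizingSeq.norm_sub_le_of_tendsto (hs : IsMinimizingSeq A g ε L xs) (hε : 0 < ε)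
    (hL : 0 < L) {a : X} (ha : Tendsto xs atTop (𝓝 a)) (n : ℕ) : ‖a - xs n‖ ≤ L := by
  refine le_of_tendsto ((ha.sub_const (xs n)).norm) ?_
  filter_upwards [eventually_ge_atTop n] with m hm
  exact (hs.norm_sub_le hε hL hm).trans
    (mul_le_of_le_one_right hL.le (pow_le_one₀ (by norm_num) (by norm_num)))

lemma IsMinimizingSeq.stage_le_of_tendsto (hs : IsMinimizingSeq A g ε L xs) (hg : Continuous g)
    {a : X} (ha : Tendsto xs atTop (𝓝 a)) (hε : 0 < ε) (n m : ℕ) :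
    stage g (2 * ε / L ^ 2) xs n a ≤ stage g (2 * ε / L ^ 2) xs m (xs m) := by
  refine le_of_tendsto (((continuous_stage hg _ xs n).tendsto a).comp ha) ?_
  filter_upwards [eventually_ge_atTop (max n m)] with k hk
  exact (stage_mono (by positivity) (le_of_max_le_left hk) _).trans
    (hs.stage_antitone (le_of_max_le_right hk))

lemma IsMinimizingSeq.isMinOn_of_hasSum (hs : IsMinimizingSeq A g ε L xs) (hε : 0 < ε)
    (hg : Continuous g) {a : X} (ha : Tendsto xs atTop (𝓝 a)) {T : X → ℝ}
    (hT : ∀ x, HasSum (fun k => (2⁻¹ : ℝ) ^ (k + 1) * ‖x - xs k‖ ^ 2) (T x)) :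
    IsMinOn (fun x => g x + 2 * ε / L ^ 2 * T x) A a ∧
      g a + 2 * ε / L ^ 2 * T a ≤ g (xs 0) := by
  set σ := 2 * ε / L ^ 2
  have hσ : 0 ≤ σ := by positivity
  have hlim : ∀ x, Tendsto (fun n => stage g σ xs n x) atTop (𝓝 (g x + σ * T x)) := fun x =>
    ((hT x).tendsto_sum_nat.const_mul σ).const_add (g x)
  have hle : ∀ n x, stage g σ xs n x ≤ g x + σ * T x := fun n x => by
    unfold stage
    gcongr
    exact sum_le_hasSum _ (fun _ _ => by positivity) (hT x)
  have hval : ∀ m, g a + σ * T a ≤ stage g σ xs m (xs m) := fun m =>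
    le_of_tendsto (hlim a) (Eventually.of_forall fun n => hs.stage_le_of_tendsto hg ha hε n m)
  refine ⟨isMinOn_iff.2 fun x hx => ?_, by simpa [stage] using hval 0⟩
  have hδ : Tendsto (fun m => g x + σ * T x + ε * (8⁻¹ : ℝ) ^ m) atTop (𝓝 (g x + σ * T x)) := by
    simpa using (tendsto_pow_atTop_nhds_zero_of_lt_one (r := (8⁻¹ : ℝ)) (by norm_num)
      (by norm_num)).const_mul ε |>.const_add (g x + σ * T x)
  refine ge_of_tendsto hδ (Eventually.of_forall fun m => ?_)
  linarith [hval m, hs.stage_le m x hx, hle m x]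

end BorweinPreiss

lemma norm_sub_le_of_hasSum_smul {E ι : Type*} [NormedAddCommGroup E] [NormedSpace ℝ E]
    {w : ι → ℝ} {xs : ι → E} {c y : E} {r : ℝ} (hw : HasSum w 1) (hw₀ : ∀ k, 0 ≤ w k)
    (hc : HasSum (fun k => w k • xs k) c) (hr : ∀ k, ‖y - xs k‖ ≤ r) : ‖y - c‖ ≤ r := by
  have hsum : HasSum (fun k => w k • (y - xs k)) (y - c) := by
    simpa [smul_sub] using (hw.smul_const y).sub hc
  refine hsum.norm_le_of_bounded (by simpa using hw.mul_right r) fun k => ?_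
  rw [norm_smul, Real.norm_of_nonneg (hw₀ k)]
  exact mul_le_mul_of_nonneg_left (hr k) (hw₀ k)

lemma hasSum_mul_norm_sub_sq {X ι : Type*} [NormedAddCommGroup X] [InnerProductSpace ℝ X]
    {w : ι → ℝ} {xs : ι → X} {c : X} {s : ℝ} (hw : HasSum w 1)
    (hc : HasSum (fun k => w k • xs k) c) (hs : HasSum (fun k => w k * ‖xs k‖ ^ 2) s) (x : X) :
    HasSum (fun k => w k * ‖x - xs k‖ ^ 2) (‖x - c‖ ^ 2 + (s - ‖c‖ ^ 2)) := by
  have h := ((hw.mul_right (‖x‖ ^ 2)).sub ((hc.mapL (innerSL ℝ x)).mul_left 2)).add hs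
  simp only [innerSL_apply_apply, real_inner_smul_right] at h
  have hk : ∀ k, w k * ‖x - xs k‖ ^ 2 =
      w k * ‖x‖ ^ 2 - 2 * (w k * inner ℝ x (xs k)) + w k * ‖xs k‖ ^ 2 := fun k => by
    rw [norm_sub_sq_real]; ring
  rw [show ‖x - c‖ ^ 2 + (s - ‖c‖ ^ 2) = 1 * ‖x‖ ^ 2 - 2 * inner ℝ x c + s by
    rw [norm_sub_sq_real]; ring]
  simpa only [hk] using h

lemma hasSum_inv_two_pow_succ : HasSum (fun k : ℕ => (2⁻¹ : ℝ) ^ (k + 1)) 1 := by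
  convert hasSum_geometric_two' 1 using 2 with k
  rw [pow_succ, inv_pow]; ring

open BorweinPreiss in
/-- Borwein–Preiss smooth variational principle in a Hilbert space. -/
theorem exists_isMinOn_add_mul_norm_sub_sq {X : Type*} [NormedAddCommGroup X]
    [InnerProductSpace ℝ X] [CompleteSpace X] {A : Set X} (hA : IsClosed A) {g : X → ℝ}
    (hg : Continuous g) {x₀ : X} (hx₀ : x₀ ∈ A) {ε L : ℝ} (hε : 0 < ε) (hL : 0 < L)
    (h₀ : ∀ x ∈ A, g x₀ ≤ g x + ε) :
    ∃ a ∈ A, ∃ c : X, ‖a - c‖ ≤ L ∧ g a ≤ g x₀ ∧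
      IsMinOn (fun x => g x + 2 * ε / L ^ 2 * ‖x - c‖ ^ 2) A a := by
  obtain ⟨xs, rfl, hs⟩ := exists_isMinimizingSeq (L := L) hε hx₀ h₀
  obtain ⟨a, ha⟩ := cauchySeq_tendsto_of_complete (hs.cauchySeq hε hL)
  have hw := hasSum_inv_two_pow_succ
  have hw₀ : ∀ k : ℕ, (0 : ℝ) ≤ 2⁻¹ ^ (k + 1) := fun k => by positivity
  have hbdd : ∀ k, ‖xs k‖ ≤ ‖xs 0‖ + L := fun k => by
    have := hs.norm_sub_le hε hL (Nat.zero_le k)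
    rw [pow_zero, mul_one] at this
    linarith [norm_le_norm_add_norm_sub' (xs k) (xs 0)]
  obtain ⟨c, hc⟩ : Summable fun k => (2⁻¹ : ℝ) ^ (k + 1) • xs k :=
    .of_norm_bounded (hw.summable.mul_right (‖xs 0‖ + L)) fun k => by
      rw [norm_smul, Real.norm_of_nonneg (hw₀ k)]
      exact mul_le_mul_of_nonneg_left (hbdd k) (hw₀ k)
  obtain ⟨s, hsq⟩ : Summable fun k => (2⁻¹ : ℝ) ^ (k + 1) * ‖xs k‖ ^ 2 :=
    .of_nonneg_of_le (fun k => by positivity)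
      (fun k => mul_le_mul_of_nonneg_left (pow_le_pow_left₀ (norm_nonneg _) (hbdd k) 2) (hw₀ k))
      (hw.summable.mul_right ((‖xs 0‖ + L) ^ 2))
  have hT := hasSum_mul_norm_sub_sq hw hc hsq
  obtain ⟨hmin, hle⟩ := hs.isMinOn_of_hasSum hε hg ha hT
  have hT₀ : 0 ≤ ‖a - c‖ ^ 2 + (s - ‖c‖ ^ 2) := (hT a).nonneg fun k => by positivity
  refine ⟨a, hA.mem_of_tendsto ha (Eventually.of_forall hs.mem), c,
    norm_sub_le_of_hasSum_smul hw hw₀ hc (hs.norm_sub_le_of_tendsto hε hL ha), ?_,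
    isMinOn_iff.2 fun x hx => ?_⟩
  · nlinarith [show 0 ≤ 2 * ε / L ^ 2 by positivity]
  · have := isMinOn_iff.1 hmin x hx
    linarith

theorem exists_mem_ball_isMinOn_add_of_hasFDerivAt {X : Type*} [NormedAddCommGroup X]
    [InnerProductSpace ℝ X] [CompleteSpace X] {A : Set X} (hA : IsClosed A) {f : X → ℝ}
    (hf : Continuous f) {xbar : X} (hxbar : xbar ∈ A) {m ε lam : ℝ} (hm : ∀ x ∈ A, m ≤ f x)
    (hfxbar : f xbar < m + ε) (hlam : 0 < lam) :
    ∃ a ∈ A ∩ ball xbar lam, f a ≤ f xbar ∧ ∃ (h : X → ℝ) (w : X), lam * ‖w‖ < ε ∧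
      HasFDerivAt h (innerSL ℝ w) a ∧ IsMinOn (fun x => f x + h x) A a := by
  obtain ⟨ρ, hρ, hρε⟩ := exists_between (sub_lt_iff_lt_add'.2 hfxbar)
  have hρ₀ : 0 < ρ := by linarith [hm xbar hxbar]
  set s := ρ / lam
  have hs : 0 < s := by positivity
  obtain ⟨η, hη, hsη⟩ := exists_pos_mul_lt (sub_pos.2 hρ) s
  set φ : X → ℝ := fun x => √(‖x - xbar‖ ^ 2 + η ^ 2)
  have hφ_ge : ∀ x, ‖x - xbar‖ ≤ φ x ∧ η ≤ φ x := fun x =>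
    ⟨Real.le_sqrt_of_sq_le (le_add_of_nonneg_right (sq_nonneg η)),
      Real.le_sqrt_of_sq_le (le_add_of_nonneg_left (sq_nonneg _))⟩
  have hφxbar : φ xbar = η := by simp [φ, Real.sqrt_sq hη.le]
  set L := 8 * lam * ρ / (ε - ρ)
  have hL : 0 < L := div_pos (by positivity) (sub_pos.2 hρε)
  obtain ⟨a, haA, c, hac, hga, hmin⟩ := exists_isMinOn_add_mul_norm_sub_sq hA
    (g := fun x => f x + s * φ x) (by fun_prop) hxbar hρ₀ hL fun x hx => by
      nlinarith [hm x hx, (hφ_ge x).2]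
  simp only [hφxbar] at hga
  obtain ⟨v, hv, hφ'⟩ := hasFDerivAt_sqrt_norm_sub_sq_add_sq xbar a hη
  set σ := 2 * ρ / L ^ 2
  refine ⟨a, ⟨haA, ?_⟩, ?_, fun x => s * φ x + σ * ‖x - c‖ ^ 2, s • v + (σ * 2) • (a - c),
    ?_, ?_, by simpa only [add_assoc] using hmin⟩
  · rw [mem_ball, dist_eq_norm, ← mul_lt_mul_iff_right₀ hs, div_mul_cancel₀ ρ hlam.ne']
    nlinarith [hm a haA, (hφ_ge a).1]
  · nlinarith [(hφ_ge a).2]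
  · have hnorm : ‖s • v + (σ * 2) • (a - c)‖ ≤ s + σ * 2 * L := by
      refine (norm_add_le _ _).trans ?_
      rw [norm_smul, norm_smul, Real.norm_of_nonneg hs.le, Real.norm_of_nonneg (by positivity)]
      gcongr
      exact mul_le_of_le_one_right hs.le hv
    calc lam * ‖s • v + (σ * 2) • (a - c)‖ ≤ lam * (s + σ * 2 * L) := by gcongr
      _ = ρ + (ε - ρ) / 2 := by simp only [s, σ, L]; field_simp; ring
      _ < ε := by linarith
  · refine ((hφ'.const_mul s).add ((hasFDerivAt_norm_sub_sq c a).const_mul σ)).congr_fderiv ?_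
    ext y
    simp only [map_smul, map_sub, add_apply, smul_apply, coe_innerSL_apply, smul_eq_mul, sub_apply,
      map_add]
    ring

theorem stmt16_general {X : Type*} [NormedAddCommGroup X] [InnerProductSpace ℝ X]
    [CompleteSpace X]
    (A : Set X) (hA : IsClosed A) (xbar : X) (hxbar : xbar ∈ A)
    (ε q : ℝ) (hq : 0 < q) (b : X) (hb : b ∉ A)
    (hd : ‖b - xbar‖ ^ q < (Metric.infDist b A) ^ q + ε) :
    ∀ lam > (0 : ℝ), ∃ a ∈ A ∩ Metric.ball xbar lam,
      ‖b - a‖ ^ q < (Metric.infDist b A) ^ q + ε ∧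
      q * lam * ‖b - a‖ ^ (q - 2) *
        Metric.infDist (b - a) (frechetNormal A a) < ε := by
  intro lam hlam
  have hM : 0 < infDist b A := (hA.notMem_iff_infDist_pos ⟨xbar, hxbar⟩).1 hb
  have hlow : ∀ x ∈ A, infDist b A ^ q ≤ ‖b - x‖ ^ q := fun x hx =>
    Real.rpow_le_rpow hM.le (dist_eq_norm b x ▸ infDist_le_dist_of_mem hx) hq.le
  obtain ⟨a, ha, hfa, h, w, hw, hh, hmin⟩ := exists_mem_ball_isMinOn_add_of_hasFDerivAt hA
    (f := fun x => ‖b - x‖ ^ q) (.rpow_const (by fun_prop) fun _ => Or.inr hq.le) hxbar hlow hd hlam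
  have hab : a ≠ b := fun h => hb (h ▸ ha.1)
  have hκ : 0 < q * ‖b - a‖ ^ (q - 2) :=
    mul_pos hq (Real.rpow_pos_of_pos (norm_pos_iff.2 (sub_ne_zero.2 hab.symm)) _)
  have hdist := infDist_sub_frechetNormal_le hκ hmin
    (((hasFDerivAt_norm_sub_rpow hab q).add hh).congr_fderiv (map_add _ _ _).symm)
  refine ⟨a, ha, hfa.trans_lt hd, ?_⟩
  calc q * lam * ‖b - a‖ ^ (q - 2) * infDist (b - a) (frechetNormal A a)
      ≤ lam * (q * ‖b - a‖ ^ (q - 2)) * (‖w‖ / (q * ‖b - a‖ ^ (q - 2))) := by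
        rw [mul_comm q lam, mul_assoc lam]; gcongr
    _ = lam * ‖w‖ := by rw [mul_assoc, mul_div_cancel₀ _ hκ.ne']
    _ < ε := hw

/-- a Hölder-type dual necessary condition for a point outside a closed
set in a Hilbert space; powers are real powers (`rpow`). -/
theorem stmt16 {X : Type*} [NormedAddCommGroup X] [InnerProductSpace ℝ X]
    [CompleteSpace X]
    (A : Set X) (hA : IsClosed A) (xbar : X) (hxbar : xbar ∈ A)
    (ε q : ℝ) (hε : 0 < ε) (hq : 0 < q) (b : X) (hb : b ∉ A)
    (hd : ‖b - xbar‖ ^ q < (Metric.infDist b A) ^ q + ε) :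
    ∀ lam > (0 : ℝ), ∃ a ∈ A ∩ Metric.ball xbar lam,
      ‖b - a‖ ^ q < (Metric.infDist b A) ^ q + ε ∧
      q * lam * ‖b - a‖ ^ (q - 2) *
        Metric.infDist (b - a) (frechetNormal A a) < ε :=
  stmt16_general A hA xbar hxbar ε q hq b hb hd
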